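/- arXiv:1903.08387 — 3 statements merged into one kernel-verified Lean document; each statement's English description precedes it below -/
import Mathlib

section
/- Let n ≥ 0 and b > 1, c > 0, c' > 0 be reals and ℓ ≥ 1 an integer. Let H_0 ⊇ H_1 ⊇ ⋯ ⊇ H_ℓ be finite sets of affine functions f : ℝ² → ℝ (nonvertical planes in ℝ³) with |H_0| ≤ n. For each j ∈ {1,…,ℓ}, let Γ_j be a finite family of at most c'·b^j downward cells such that each cell of Γ_j is intersected by at most c·n/b^j planes of H_{j−1}. Suppose that for every i ∈ {1,…,ℓ}, every plane h ∈ H_{i−1} \ H_i satisfies Σ_{j=1}^{i} #{Δ ∈ Γ_j : h intersects Δ} > 2·c·c'·ℓ. Then |H_0 \ H_ℓ| ≤ n/2. -/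
/-- A point in ℝ³, written as `(x, (y, z))`. -/
abbrev Point3 := ℝ × ℝ × ℝ

/-- A nonvertical plane in ℝ³, identified with a function `ℝ² → ℝ`. -/
abbrev Plane3 := ℝ × ℝ → ℝ

/-- `f : ℝ² → ℝ` is affine. -/
def IsAffine (f : Plane3) : Prop :=
  ∃ a b c : ℝ, ∀ x y : ℝ, f (x, y) = a * x + b * y + c

/-- The level of a point `q = (x, y, z)` with respect to a finite set `H` of planes:
the number of `f ∈ H` with `f (x, y) < z`. -/
noncomputable def level (H : Finset Plane3) (q : Point3) : ℕ :=
  {f ∈ (H : Set Plane3) | f (q.1, q.2.1) < q.2.2}.ncard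

/-- A downward cell: all points below the graph of an affine function `g`, over the
convex hull `T` of three points in the plane. -/
def IsDownwardCell (Δ : Set Point3) : Prop :=
  ∃ (t₁ t₂ t₃ : ℝ × ℝ) (g : Plane3), IsAffine g ∧
    Δ = {q : Point3 | (q.1, q.2.1) ∈ convexHull ℝ ({t₁, t₂, t₃} : Set (ℝ × ℝ)) ∧
          q.2.2 ≤ g (q.1, q.2.1)}

/-- A plane `f` intersects a downward cell `Δ` iff the graph of `f` meets `Δ`,
i.e. `f (x, y) ≤ g (x, y)` for some `(x, y) ∈ T`. -/
def Intersects (f : Plane3) (Δ : Set Point3) : Prop :=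
  ∃ xy : ℝ × ℝ, ((xy.1, xy.2, f xy) : Point3) ∈ Δ

/-- The size of the conflict list of a cell `Δ`: the number of planes of `H`
intersecting `Δ`. -/
noncomputable def conflictSize (H : Finset Plane3) (Δ : Set Point3) : ℕ :=
  {f ∈ (H : Set Plane3) | Intersects f Δ}.ncard

attribute [local instance] Classical.propDecidable

/-! A pruned plane `h` is charged, at every level `j ≤ ℓ` it survives to, one unit per cell of
`Γ j` it intersects. By the first level at which it is pruned it has collected more than
`2cc'ℓ` units. Counted per cell instead, level `j` hands out at most
`|Γ j| · cn/bʲ ≤ cc'n` units, so at most `ℓ · cc'n` in total, and hence at most `n / 2`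
planes are pruned. -/

open Finset

lemma Nat.exists_first_not {P : ℕ → Prop} {ℓ : ℕ} (h0 : P 0) (hℓ : ¬ P ℓ) :
    ∃ i ∈ Icc 1 ℓ, ¬ P i ∧ ∀ k < i, P k := by
  classical
  have hex : ∃ i, ¬ P i := ⟨ℓ, hℓ⟩
  refine ⟨Nat.find hex, mem_Icc.2 ⟨?_, Nat.find_min' hex hℓ⟩, Nat.find_spec hex,
    fun k hk => not_not.1 (Nat.find_min hex hk)⟩
  exact Nat.one_le_iff_ne_zero.2 fun hzero => Nat.find_spec hex (hzero ▸ h0)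

lemma Set.ncard_sep_coe {α : Type*} (s : Finset α) (p : α → Prop) [DecidablePred p] :
    {x ∈ (s : Set α) | p x}.ncard = #{x ∈ s | p x} := by
  rw [← Set.ncard_coe_finset, coe_filter]
  rfl

lemma Finset.sum_le_mul_of_card_le_mul {β : Type*} {s : Finset β} {f : β → ℝ} {a x y : ℝ}
    (ha : 0 ≤ a) (hy : 0 ≤ y) (hs : (#s : ℝ) ≤ a * x) (hf : ∀ i ∈ s, f i ≤ y / x) :
    ∑ i ∈ s, f i ≤ a * y := by
  calc ∑ i ∈ s, f i ≤ #s * (y / x) := by simpa using sum_le_card_nsmul s f _ hf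
    _ ≤ a * y := by
      rcases lt_or_ge 0 x with hx | hx
      · calc (#s : ℝ) * (y / x) ≤ a * x * (y / x) := by gcongr
          _ = a * y := by field_simp
      · exact (mul_nonpos_of_nonneg_of_nonpos (Nat.cast_nonneg _)
          (div_nonpos_of_nonneg_of_nonpos hy hx)).trans (mul_nonneg ha hy)

section Charging

variable {α β : Type*} [DecidableEq α] (H : ℕ → Finset α) (Γ : ℕ → Finset β)
  (r : α → β → Prop) [DecidableRel r] (ℓ : ℕ)

def charge (h : α) : ℕ :=
  ∑ j ∈ Icc 1 ℓ, if h ∈ H (j - 1) then #{Δ ∈ Γ j | r h Δ} else 0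

variable {H Γ r ℓ}

lemma sum_card_filter_le_charge {h : α} {i : ℕ} (hi : i ≤ ℓ) (hstay : ∀ k < i, h ∈ H k) :
    ∑ j ∈ Icc 1 i, #{Δ ∈ Γ j | r h Δ} ≤ charge H Γ r ℓ h :=
  calc ∑ j ∈ Icc 1 i, #{Δ ∈ Γ j | r h Δ}
      = ∑ j ∈ Icc 1 i, if h ∈ H (j - 1) then #{Δ ∈ Γ j | r h Δ} else 0 :=
        sum_congr rfl fun j hj => (if_pos (hstay _ (by grind))).symm
    _ ≤ charge H Γ r ℓ h := sum_le_sum_of_subset (Icc_subset_Icc_right hi)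

lemma sum_charge_le (S : Finset α) :
    ∑ h ∈ S, charge H Γ r ℓ h ≤ ∑ j ∈ Icc 1 ℓ, ∑ Δ ∈ Γ j, #{h ∈ H (j - 1) | r h Δ} := by
  simp only [charge]
  rw [sum_comm]
  refine sum_le_sum fun j _ => ?_
  rw [sum_ite_mem]
  exact (sum_le_sum_of_subset inter_subset_right).trans_eq
    (sum_card_bipartiteAbove_eq_sum_card_bipartiteBelow r)

end Charging

theorem pruned_planes_bound_general (n : ℝ) (b c c' : ℝ)
    (hc : 0 < c) (hc' : 0 < c')
    (ℓ : ℕ) (hℓ : 1 ≤ ℓ)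
    (H : ℕ → Finset Plane3)
    (hH0 : ((H 0).card : ℝ) ≤ n)
    (Γ : ℕ → Finset (Set Point3))
    (hΓcard : ∀ j : ℕ, 1 ≤ j → j ≤ ℓ → ((Γ j).card : ℝ) ≤ c' * b ^ j)
    (hconf : ∀ j : ℕ, 1 ≤ j → j ≤ ℓ →
      ∀ Δ ∈ Γ j, (conflictSize (H (j - 1)) Δ : ℝ) ≤ c * n / b ^ j)
    (hbad : ∀ i : ℕ, 1 ≤ i → i ≤ ℓ → ∀ h ∈ H (i - 1) \ H i,
      2 * c * c' * (ℓ : ℝ) <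
        ∑ j ∈ Finset.Icc 1 i,
          (({Δ ∈ ((Γ j) : Set (Set Point3)) | Intersects h Δ}.ncard : ℝ))) :
    (((H 0) \ (H ℓ)).card : ℝ) ≤ n / 2 := by
  simp only [conflictSize, Set.ncard_sep_coe] at hconf hbad
  have hcn : 0 ≤ c * n := mul_nonneg hc.le ((Nat.cast_nonneg _).trans hH0)
  set B := H 0 \ H ℓ
  have hlow : ∀ h ∈ B, 2 * c * c' * ℓ ≤ (charge H Γ Intersects ℓ h : ℝ) := by
    intro h hh
    obtain ⟨h0, hhℓ⟩ := mem_sdiff.1 hh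
    obtain ⟨i, hi, hexit, hstay⟩ := Nat.exists_first_not (P := (h ∈ H ·)) h0 hhℓ
    obtain ⟨hi1, hiℓ⟩ := mem_Icc.1 hi
    refine (hbad i hi1 hiℓ h (mem_sdiff.2 ⟨hstay _ (by omega), hexit⟩)).le.trans ?_
    exact_mod_cast sum_card_filter_le_charge hiℓ hstay
  have hup : (∑ h ∈ B, charge H Γ Intersects ℓ h : ℝ) ≤ ℓ * (c' * (c * n)) :=
    calc (∑ h ∈ B, charge H Γ Intersects ℓ h : ℝ)
        ≤ ∑ j ∈ Icc 1 ℓ, ∑ Δ ∈ Γ j, (#{h ∈ H (j - 1) | Intersects h Δ} : ℝ) := by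
          exact_mod_cast sum_charge_le (H := H) (Γ := Γ) (r := Intersects) (ℓ := ℓ) B
      _ ≤ ∑ _j ∈ Icc 1 ℓ, c' * (c * n) := sum_le_sum fun j hj =>
          sum_le_mul_of_card_le_mul hc'.le hcn (hΓcard j (mem_Icc.1 hj).1 (mem_Icc.1 hj).2)
            (hconf j (mem_Icc.1 hj).1 (mem_Icc.1 hj).2)
      _ = ℓ * (c' * (c * n)) := by simp
  have hcount := card_nsmul_le_sum B _ _ hlow
  rw [nsmul_eq_mul] at hcount
  have hpos : 0 < c * c' * ℓ := by positivity
  nlinarith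

/-- The charging argument of Section 4: if `H_0 ⊇ H_1 ⊇ ⋯ ⊇ H_ℓ` with `|H_0| ≤ n`,
each `Γ_j` (for `1 ≤ j ≤ ℓ`) is a family of at most `c'·b^j` downward cells each
intersected by at most `c·n/b^j` planes of `H_{j−1}`, and every pruned plane
`h ∈ H_{i−1} \ H_i` intersects more than `2·c·c'·ℓ` cells of `Γ_1 ∪ ⋯ ∪ Γ_i`
(counted with multiplicity over the `Γ_j`), then `|H_0 \ H_ℓ| ≤ n/2`. -/
theorem pruned_planes_bound (n : ℝ) (hn : 0 ≤ n) (b c c' : ℝ)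
    (hb : 1 < b) (hc : 0 < c) (hc' : 0 < c')
    (ℓ : ℕ) (hℓ : 1 ≤ ℓ)
    (H : ℕ → Finset Plane3)
    (hplanes : ∀ f ∈ H 0, IsAffine f)
    (hmono : ∀ i : ℕ, 1 ≤ i → i ≤ ℓ → H i ⊆ H (i - 1))
    (hH0 : ((H 0).card : ℝ) ≤ n)
    (Γ : ℕ → Finset (Set Point3))
    (hcells : ∀ j : ℕ, 1 ≤ j → j ≤ ℓ → ∀ Δ ∈ Γ j, IsDownwardCell Δ)
    (hΓcard : ∀ j : ℕ, 1 ≤ j → j ≤ ℓ → ((Γ j).card : ℝ) ≤ c' * b ^ j)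
    (hconf : ∀ j : ℕ, 1 ≤ j → j ≤ ℓ →
      ∀ Δ ∈ Γ j, (conflictSize (H (j - 1)) Δ : ℝ) ≤ c * n / b ^ j)
    (hbad : ∀ i : ℕ, 1 ≤ i → i ≤ ℓ → ∀ h ∈ H (i - 1) \ H i,
      2 * c * c' * (ℓ : ℝ) <
        ∑ j ∈ Finset.Icc 1 i,
          (({Δ ∈ ((Γ j) : Set (Set Point3)) | Intersects h Δ}.ncard : ℝ))) :
    (((H 0) \ (H ℓ)).card : ℝ) ≤ n / 2 :=
  pruned_planes_bound_general n b c c' hc hc' ℓ hℓ H hH0 Γ hΓcard hconf hbad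
end

section
/- Let v_i = (x_i, y_i, z_i) ∈ ℝ³ for i = 1,2,3, let T ⊆ ℝ² be the convex hull of (x_1,y_1), (x_2,y_2), (x_3,y_3), and let g : ℝ² → ℝ be an affine function with g(x_i, y_i) = z_i for i = 1,2,3; let Δ = {(x,y,z) : (x,y) ∈ T, z ≤ g(x,y)} be the downward cell under the triangle with vertices v_1, v_2, v_3. If an affine function f : ℝ² → ℝ intersects Δ (i.e., f(x,y) ≤ g(x,y) for some (x,y) ∈ T), then f(x_i, y_i) ≤ z_i for some i ∈ {1,2,3}. Consequently, for any finite set H of affine functions and any K ≥ 0, if each vertex v_i has level at most K with respect to H and no f ∈ H satisfies f(x_i, y_i) = z_i for any i, then at most 3K planes of H intersect Δ. -/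
/-!
An affine function is positive on a convex set as soon as it is positive at the points spanning
it, because its positivity set is a half-plane. Applied to `f - g` on the triangle `T`, a plane `f`
meeting the cell `Δ` must lie weakly below `g` at some vertex; if it misses the vertices, it lies
strictly below one of them and is counted in that vertex's level. Summing the three levels gives
`3 K`.
-/

namespace IsAffine

variable {f g h : Plane3}

theorem sub (hf : IsAffine f) (hg : IsAffine g) : IsAffine (f - g) := by
  obtain ⟨a, b, c, hf⟩ := hf
  obtain ⟨a', b', c', hg⟩ := hg
  exact ⟨a - a', b - b', c - c', fun x y => by simp only [Pi.sub_apply, hf, hg]; ring⟩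

theorem convex_setOf_pos (hh : IsAffine h) : Convex ℝ {p | 0 < h p} := by
  obtain ⟨a, b, c, hh⟩ := hh
  have hlin : IsLinearMap ℝ fun p : ℝ × ℝ => a * p.1 + b * p.2 :=
    (a • LinearMap.fst ℝ ℝ ℝ + b • LinearMap.snd ℝ ℝ ℝ).isLinear
  have hset : {p | 0 < h p} = {p : ℝ × ℝ | -c < a * p.1 + b * p.2} := by
    ext ⟨x, y⟩
    change 0 < h (x, y) ↔ -c < a * x + b * y
    rw [hh]
    constructor <;> intro <;> linarith
  exact hset ▸ convex_halfSpace_gt hlin (-c)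

theorem exists_le_of_mem_convexHull (hf : IsAffine f) (hg : IsAffine g) {s : Set (ℝ × ℝ)}
    {p : ℝ × ℝ} (hp : p ∈ convexHull ℝ s) (hfg : f p ≤ g p) : ∃ t ∈ s, f t ≤ g t := by
  by_contra! hlt
  have hpos : s ⊆ {q | 0 < (f - g) q} := fun t ht => sub_pos.mpr (hlt t ht)
  have := convexHull_min hpos (hf.sub hg).convex_setOf_pos hp
  exact (sub_pos.mp this).not_ge hfg

end IsAffine

theorem conflictSize_le_level_add_level_add_level (H : Finset Plane3) (Δ : Set Point3)
    (v₁ v₂ v₃ : Point3)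
    (hbelow : ∀ f ∈ H, Intersects f Δ →
      f (v₁.1, v₁.2.1) < v₁.2.2 ∨ f (v₂.1, v₂.2.1) < v₂.2.2 ∨ f (v₃.1, v₃.2.1) < v₃.2.2) :
    conflictSize H Δ ≤ level H v₁ + level H v₂ + level H v₃ := by
  set L : Point3 → Set Plane3 := fun v => {f ∈ (H : Set Plane3) | f (v.1, v.2.1) < v.2.2}
  have hfin : ∀ v, (L v).Finite := fun v => H.finite_toSet.subset fun f hf => hf.1
  have hsub : {f ∈ (H : Set Plane3) | Intersects f Δ} ⊆ L v₁ ∪ L v₂ ∪ L v₃ := by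
    rintro f ⟨hfH, hfΔ⟩
    rcases hbelow f hfH hfΔ with h | h | h
    exacts [.inl (.inl ⟨hfH, h⟩), .inl (.inr ⟨hfH, h⟩), .inr ⟨hfH, h⟩]
  calc conflictSize H Δ ≤ (L v₁ ∪ L v₂ ∪ L v₃).ncard :=
        Set.ncard_le_ncard hsub (((hfin v₁).union (hfin v₂)).union (hfin v₃))
    _ ≤ (L v₁ ∪ L v₂).ncard + (L v₃).ncard := Set.ncard_union_le _ _
    _ ≤ level H v₁ + level H v₂ + level H v₃ :=
        add_le_add (Set.ncard_union_le _ _) le_rfl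

/-- Conflict-list bound for a cell under a triangle (appendix proof of Lemma 2).
Let `Δ` be the downward cell under the triangle with vertices `vᵢ = (xᵢ, yᵢ, zᵢ)`,
i.e. the points below the affine function `g` (which interpolates the three vertices)
over the convex hull `T` of the `(xᵢ, yᵢ)`.  If an affine `f` intersects `Δ` then
`f (xᵢ, yᵢ) ≤ zᵢ` for some `i`; consequently, if every vertex `vᵢ` has level at most
`K` w.r.t. `H` and no `f ∈ H` passes exactly through a vertex, then at most `3·K`
planes of `H` intersect `Δ`. -/
theorem cell_conflict_bound (x₁ y₁ z₁ x₂ y₂ z₂ x₃ y₃ z₃ : ℝ)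
    (g : Plane3) (hg : IsAffine g)
    (hg1 : g (x₁, y₁) = z₁) (hg2 : g (x₂, y₂) = z₂) (hg3 : g (x₃, y₃) = z₃) :
    (∀ f : Plane3, IsAffine f →
      (∃ xy ∈ convexHull ℝ ({(x₁, y₁), (x₂, y₂), (x₃, y₃)} : Set (ℝ × ℝ)),
        f xy ≤ g xy) →
      f (x₁, y₁) ≤ z₁ ∨ f (x₂, y₂) ≤ z₂ ∨ f (x₃, y₃) ≤ z₃) ∧
    (∀ (H : Finset Plane3), (∀ f ∈ H, IsAffine f) →
      ∀ K : ℝ, 0 ≤ K →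
        (level H (x₁, y₁, z₁) : ℝ) ≤ K →
        (level H (x₂, y₂, z₂) : ℝ) ≤ K →
        (level H (x₃, y₃, z₃) : ℝ) ≤ K →
        (∀ f ∈ H, f (x₁, y₁) ≠ z₁ ∧ f (x₂, y₂) ≠ z₂ ∧ f (x₃, y₃) ≠ z₃) →
        (conflictSize H
            {q : Point3 |
              (q.1, q.2.1) ∈ convexHull ℝ ({(x₁, y₁), (x₂, y₂), (x₃, y₃)} : Set (ℝ × ℝ)) ∧
              q.2.2 ≤ g (q.1, q.2.1)} : ℝ) ≤ 3 * K) := by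
  have vertex_le : ∀ f : Plane3, IsAffine f →
      (∃ xy ∈ convexHull ℝ ({(x₁, y₁), (x₂, y₂), (x₃, y₃)} : Set (ℝ × ℝ)), f xy ≤ g xy) →
      f (x₁, y₁) ≤ z₁ ∨ f (x₂, y₂) ≤ z₂ ∨ f (x₃, y₃) ≤ z₃ := by
    rintro f hf ⟨xy, hxy, hfg⟩
    obtain ⟨t, ht, hft⟩ := hf.exists_le_of_mem_convexHull hg hxy hfg
    rcases ht with rfl | rfl | rfl
    exacts [.inl (hg1 ▸ hft), .inr (.inl (hg2 ▸ hft)), .inr (.inr (hg3 ▸ hft))]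
  refine ⟨vertex_le, fun H hH K _ h₁ h₂ h₃ hne => ?_⟩
  refine (Nat.cast_le.mpr (conflictSize_le_level_add_level_add_level H _
    (x₁, y₁, z₁) (x₂, y₂, z₂) (x₃, y₃, z₃) ?_)).trans ?_
  · rintro f hf ⟨xy, hxy, hfg⟩
    obtain ⟨hne₁, hne₂, hne₃⟩ := hne f hf
    rcases vertex_le f (hH f hf) ⟨xy, hxy, hfg⟩ with h | h | h
    exacts [.inl (h.lt_of_ne hne₁), .inr (.inl (h.lt_of_ne hne₂)), .inr (.inr (h.lt_of_ne hne₃))]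
  · push_cast
    linarith
end

section
/- Let P ⊆ ℝ² be a finite nonempty set and let Δ₀ ⊆ ℝ² be the convex hull of three points (a triangle). For p ∈ P, let V_p = {c ∈ ℝ² : ‖c − p‖ ≤ ‖c − p'‖ for all p' ∈ P} be the Voronoi cell of p, a closed convex set. Then there exist p ∈ P and a point c* that is an extreme point of the compact convex set Δ₀ ∩ V_p such that min_{p'∈P} ‖c* − p'‖ = max_{c ∈ Δ₀} min_{p'∈P} ‖c − p'‖. In other words, the largest circle with center in Δ₀ containing no point of P in its interior has its center at an extreme point of the intersection of Δ₀ with some Voronoi cell of P. -/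
/-!
Let `c₀` maximize the distance to `P` over the triangle and let `p` be a point of `P` nearest to
`c₀`, so that `c₀` lies in the Voronoi cell `V_p`. On the compact convex set `Δ₀ ∩ V_p` the
distance to `P` is the convex function `dist · p`, and a continuous convex function on a compact
convex set attains its maximum at an extreme point (the maximizers form an extreme subset, which
has an extreme point by the Krein–Milman lemma).
That extreme point does at least as well as `c₀`.
-/

open Set

section MaxAtExtremePoint

theorem ConvexOn.isExtreme_setOf_isMaxOn {𝕜 E β : Type*} [Semiring 𝕜] [PartialOrder 𝕜]
    [AddCommMonoid E] [AddCommMonoid β] [LinearOrder β]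
    [IsOrderedCancelAddMonoid β] [SMul 𝕜 E] [Module 𝕜 β] [PosSMulStrictMono 𝕜 β]
    {s : Set E} {f : E → β} (hf : ConvexOn 𝕜 s f) :
    IsExtreme 𝕜 s {x ∈ s | IsMaxOn f s x} := by
  refine ⟨sep_subset _ _, fun x hx y hy z ⟨_, hz⟩ hxyz => ⟨hx, fun w hw => ?_⟩⟩
  rw [isMaxOn_iff] at hz
  exact (hz w hw).trans (hf.le_left_of_right_le hx hy hxyz (hz y hy))

variable {E : Type*} [AddCommGroup E] [Module ℝ E] [TopologicalSpace E] [T2Space E]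
  [IsTopologicalAddGroup E] [ContinuousSMul ℝ E] [LocallyConvexSpace ℝ E]

theorem IsCompact.exists_extremePoint_isMaxOn {K : Set E} (hK : IsCompact K) (hne : K.Nonempty)
    {g : E → ℝ} (hg : ContinuousOn g K) (hgc : ConvexOn ℝ K g) :
    ∃ e ∈ K.extremePoints ℝ, IsMaxOn g K e := by
  obtain ⟨m, hmK, hm⟩ := hK.exists_isMaxOn hne hg
  have hmax : {x ∈ K | IsMaxOn g K x} = K ∩ g ⁻¹' Ici (g m) := by
    ext x
    exact and_congr_right fun _ =>
      ⟨fun hx => hx hmK, fun hx y hy => (isMaxOn_iff.mp hm y hy).trans hx⟩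
  have hcompact : IsCompact {x ∈ K | IsMaxOn g K x} := by
    rw [hmax]
    exact hK.of_isClosed_subset (hg.preimage_isClosed_of_isClosed hK.isClosed isClosed_Ici)
      inter_subset_left
  obtain ⟨e, he⟩ := hcompact.extremePoints_nonempty ⟨m, hmK, hm⟩
  exact ⟨e, hgc.isExtreme_setOf_isMaxOn.extremePoints_subset_extremePoints he, he.1.2⟩

end MaxAtExtremePoint

section Voronoi

variable {α : Type*} [PseudoMetricSpace α]

def voronoiCell (S : Set α) (p : α) : Set α :=
  {x | ∀ q ∈ S, dist x p ≤ dist x q}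

theorem isClosed_voronoiCell (S : Set α) (p : α) : IsClosed (voronoiCell S p) := by
  simp only [voronoiCell, ofPred_forall]
  exact isClosed_biInter fun q _ =>
    isClosed_le (continuous_id.dist continuous_const) (continuous_id.dist continuous_const)

variable {E : Type*} [NormedAddCommGroup E] [InnerProductSpace ℝ E]

theorem dist_le_dist_iff_inner_le (x p q : E) :
    dist x p ≤ dist x q ↔ inner ℝ (q - p) x ≤ (‖q‖ ^ 2 - ‖p‖ ^ 2) / 2 := by
  rw [dist_eq_norm, dist_eq_norm, ← sq_le_sq₀ (norm_nonneg _) (norm_nonneg _),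
    norm_sub_sq_real, norm_sub_sq_real, inner_sub_left, real_inner_comm q, real_inner_comm p]
  constructor <;> intro h <;> linarith

theorem convex_setOf_dist_le_dist (p q : E) : Convex ℝ {x : E | dist x p ≤ dist x q} := by
  simp only [dist_le_dist_iff_inner_le]
  exact convex_halfSpace_le (innerSL ℝ (q - p)).toLinearMap.isLinear _

theorem convex_voronoiCell (S : Set E) (p : E) : Convex ℝ (voronoiCell S p) := by
  simp only [voronoiCell, ofPred_forall]
  exact convex_iInter₂ fun q _ => convex_setOf_dist_le_dist p q

theorem Finset.exists_mem_voronoiCell {P : Finset α} (hP : P.Nonempty) (x : α) :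
    ∃ p ∈ P, x ∈ voronoiCell P p := by
  obtain ⟨p, hp, hpx⟩ := P.exists_mem_eq_inf' hP (dist x)
  exact ⟨p, hp, fun q hq => hpx ▸ P.inf'_le _ hq⟩

theorem Finset.inf'_dist_eq_of_mem_voronoiCell {P : Finset α} (hP : P.Nonempty) {p x : α}
    (hp : p ∈ P) (hx : x ∈ voronoiCell P p) :
    P.inf' hP (dist x) = dist x p :=
  le_antisymm (P.inf'_le _ hp) (P.le_inf' hP _ hx)

end Voronoi

/-- The largest empty circle with center restricted to a triangle `Δ₀` has its center
at an extreme point of the intersection of `Δ₀` with some Voronoi cell of `P`: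
for a finite nonempty `P ⊆ ℝ²` and a triangle `Δ₀ = conv{a, b, c}`, there exist
`p ∈ P` and an extreme point `c*` of the compact convex set `Δ₀ ∩ V_p` (where
`V_p = {x : ∀ p' ∈ P, dist x p ≤ dist x p'}` is the Voronoi cell of `p`) such that
`c*` maximizes `min_{p' ∈ P} ‖· − p'‖` over `Δ₀`. -/
theorem largest_empty_circle_at_extreme_point
    (P : Finset (EuclideanSpace ℝ (Fin 2))) (hP : P.Nonempty)
    (a b c : EuclideanSpace ℝ (Fin 2)) :
    ∃ p ∈ P, ∃ cstar ∈ Set.extremePoints ℝ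
        (convexHull ℝ ({a, b, c} : Set (EuclideanSpace ℝ (Fin 2))) ∩
          {x : EuclideanSpace ℝ (Fin 2) | ∀ p' ∈ P, dist x p ≤ dist x p'}),
      ∀ x ∈ convexHull ℝ ({a, b, c} : Set (EuclideanSpace ℝ (Fin 2))),
        P.inf' hP (fun p' => dist x p') ≤ P.inf' hP (fun p' => dist cstar p') := by
  set Δ := convexHull ℝ ({a, b, c} : Set (EuclideanSpace ℝ (Fin 2)))
  have hΔ : IsCompact Δ := (toFinite _).isCompact_convexHull ℝ
  obtain ⟨c₀, hc₀Δ, hc₀⟩ := hΔ.exists_isMaxOn ⟨a, subset_convexHull ℝ _ (by simp)⟩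
    (Continuous.finset_inf'_apply hP fun q _ => continuous_id.dist continuous_const).continuousOn
  obtain ⟨p, hp, hc₀V⟩ := P.exists_mem_voronoiCell hP c₀
  have hK : IsCompact (Δ ∩ voronoiCell P p) := hΔ.inter_right (isClosed_voronoiCell _ p)
  obtain ⟨e, he, hemax⟩ := hK.exists_extremePoint_isMaxOn ⟨c₀, hc₀Δ, hc₀V⟩
    (continuous_id.dist continuous_const).continuousOn
    (convexOn_dist p ((convex_convexHull ℝ _).inter (convex_voronoiCell _ p)))
  refine ⟨p, hp, e, he, fun x hx => ?_⟩
  calc P.inf' hP (dist x) ≤ P.inf' hP (dist c₀) := isMaxOn_iff.mp hc₀ x hx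
    _ = dist c₀ p := P.inf'_dist_eq_of_mem_voronoiCell hP hp hc₀V
    _ ≤ dist e p := isMaxOn_iff.mp hemax c₀ ⟨hc₀Δ, hc₀V⟩
    _ = P.inf' hP (dist e) :=
      (P.inf'_dist_eq_of_mem_voronoiCell hP hp (extremePoints_subset he).2).symm
end
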